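/- Let K_N = Σ_{j=1}^N I_j with I_j independent Bernoulli(1/(2N-2j+1)). For every fixed ε > 0 there is a constant C such that E[e^{ε K_N}] ≤ C · N^{(e^ε - 1)/2} for all N; explicitly E[e^{ε K_N}] = Γ(N + e^ε/2)√π / (Γ(N + 1/2)Γ(e^ε/2)). -/

import Mathlib

open Real Finset MeasureTheory Filter

/-!
The indicators are independent, so `E[e^{ε K_N}]` factorises; after reversing the order of the
factors, the factor with `m = N - 1 - j` is `1 + (e^ε - 1)/(2m + 1) = (m + e^ε/2)/(m + 1/2)`.
The product of these telescopes into the stated ratio of Gamma values. For the upper bound,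
`1 + x ≤ e^x` turns the product into `exp((e^ε - 1)/2 · ∑_{m<N} 1/(m + 1/2))`, and the sum is at
most `3 + log N` by comparison with the harmonic numbers.
-/

/-- Probability that the `j`-th pairing (0-indexed; the paper's `j+1`-th) closes a
cycle in `CM_N(2)`: `1/(2N - 2(j+1) + 1)`. -/
noncomputable def bernProb (N j : ℕ) : ℝ := 1 / (2 * (N : ℝ) - 2 * ((j : ℝ) + 1) + 1)

/-- Bernoulli measure on `Bool` with success probability `p`. -/
noncomputable def bern (p : ℝ) : Measure Bool :=
  ENNReal.ofReal p • Measure.dirac true + ENNReal.ofReal (1 - p) • Measure.dirac false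

/-- The law of the independent cycle-closing indicators `(I_1, …, I_N)` of `CM_N(2)`:
the product of Bernoulli`(1/(2N-2j+1))` measures. -/
noncomputable def cycleMeasure (N : ℕ) : Measure (Fin N → Bool) :=
  Measure.pi fun j => bern (bernProb N (j : ℕ))

/-- `K_N = ∑_{j=1}^N I_j`, the number of cycles in `CM_N(2)`. -/
noncomputable def KN (N : ℕ) (ω : Fin N → Bool) : ℝ := ∑ j : Fin N, if ω j then 1 else 0

instance (p : ℝ) : IsFiniteMeasure (bern p) := ⟨by simp [bern, ENNReal.add_lt_top]⟩

lemma integral_bern {p : ℝ} (hp₀ : 0 ≤ p) (hp₁ : p ≤ 1) (f : Bool → ℝ) :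
    ∫ b, f b ∂(bern p) = p * f true + (1 - p) * f false := by
  rw [integral_fintype .of_finite]
  simp [bern, measureReal_def, hp₀, hp₁]

lemma bernProb_nonneg {N j : ℕ} (hj : j < N) : 0 ≤ bernProb N j := by
  have : (j : ℝ) + 1 ≤ N := by exact_mod_cast hj
  unfold bernProb
  exact one_div_nonneg.mpr (by linarith)

lemma bernProb_le_one {N j : ℕ} (hj : j < N) : bernProb N j ≤ 1 := by
  have : (j : ℝ) + 1 ≤ N := by exact_mod_cast hj
  unfold bernProb
  exact div_le_one_of_le₀ (by linarith) (by linarith)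

lemma bernProb_sub_one_sub {N m : ℕ} (hm : m < N) :
    bernProb N (N - 1 - m) = 1 / (2 * m + 1) := by
  rw [bernProb, Nat.cast_sub (by omega), Nat.cast_sub (by omega)]
  push_cast
  ring_nf

lemma integral_exp_mul_bern {p : ℝ} (hp₀ : 0 ≤ p) (hp₁ : p ≤ 1) (ε : ℝ) :
    ∫ b, exp (ε * if b then 1 else 0) ∂(bern p) = 1 + p * (exp ε - 1) := by
  rw [integral_bern hp₀ hp₁]
  simp only [if_true, Bool.false_eq_true, if_false, mul_one, mul_zero, exp_zero]
  ring

lemma integral_exp_mul_KN (ε : ℝ) (N : ℕ) :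
    ∫ ω, exp (ε * KN N ω) ∂(cycleMeasure N)
      = ∏ m ∈ range N, ((m : ℝ) + exp ε / 2) / ((m : ℝ) + 1 / 2) := by
  have hfactor (ω : Fin N → Bool) :
      exp (ε * KN N ω) = ∏ j, exp (ε * if ω j then 1 else 0) := by
    rw [KN, mul_sum, exp_sum]
  have hfubini := integral_fintype_prod_eq_prod
    (fun (_ : Fin N) (b : Bool) => exp (ε * if b then 1 else 0))
    (μ := fun j => bern (bernProb N j))
  beta_reduce at hfubini
  simp_rw [hfactor, cycleMeasure]
  rw [hfubini, prod_congr rfl fun j _ => integral_exp_mul_bern (bernProb_nonneg j.isLt)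
      (bernProb_le_one j.isLt) ε,
    Fin.prod_univ_eq_prod_range (fun j => 1 + bernProb N j * (exp ε - 1)),
    ← prod_range_reflect]
  refine prod_congr rfl fun m hm => ?_
  rw [bernProb_sub_one_sub (mem_range.mp hm)]
  field_simp
  ring

lemma prod_range_add_eq_Gamma_div {a : ℝ} (ha : 0 < a) (N : ℕ) :
    ∏ m ∈ range N, ((m : ℝ) + a) = Gamma (N + a) / Gamma a := by
  induction N with
  | zero => simp [(Gamma_pos_of_pos ha).ne']
  | succ n ih =>
    have hpos : 0 < (n : ℝ) + a := by positivity
    rw [prod_range_succ, ih, Nat.cast_succ, add_right_comm, Gamma_add_one hpos.ne']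
    ring

lemma sum_range_one_div_add_half_le (N : ℕ) :
    ∑ m ∈ range N, 1 / ((m : ℝ) + 1 / 2) ≤ 3 + log N := by
  cases N with
  | zero => simp
  | succ n =>
    have hharmonic : ∑ i ∈ range n, 1 / ((i : ℝ) + 1) = harmonic n := by
      simp [harmonic]
    have hterm (i : ℕ) : 1 / (((i + 1 : ℕ) : ℝ) + 1 / 2) ≤ 1 / ((i : ℝ) + 1) :=
      one_div_le_one_div_of_le (by positivity) (by push_cast; linarith)
    have hlog : log n ≤ log (n + 1 : ℕ) := by
      rcases n.eq_zero_or_pos with rfl | hn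
      · simp
      · exact log_le_log (by exact_mod_cast hn) (by push_cast; linarith)
    rw [sum_range_succ']
    have := sum_le_sum fun i (_ : i ∈ range n) => hterm i
    linarith [harmonic_le_one_add_log n]

lemma prod_range_div_add_half_le_exp {a : ℝ} (ha : 0 ≤ a) (N : ℕ) :
    ∏ m ∈ range N, ((m : ℝ) + a) / ((m : ℝ) + 1 / 2)
      ≤ exp ((a - 1 / 2) * ∑ m ∈ range N, 1 / ((m : ℝ) + 1 / 2)) := by
  rw [mul_sum, exp_sum]
  refine prod_le_prod (fun m _ => by positivity) fun m _ => ?_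
  have hfactor :
      ((m : ℝ) + a) / ((m : ℝ) + 1 / 2) = (a - 1 / 2) * (1 / ((m : ℝ) + 1 / 2)) + 1 := by
    field_simp
    ring
  rw [hfactor]
  exact add_one_le_exp _

lemma prod_range_div_add_half_le_rpow {a : ℝ} (ha : 1 / 2 ≤ a) {N : ℕ} (hN : 0 < N) :
    ∏ m ∈ range N, ((m : ℝ) + a) / ((m : ℝ) + 1 / 2)
      ≤ exp (3 * (a - 1 / 2)) * (N : ℝ) ^ (a - 1 / 2) := by
  have hN' : (0 : ℝ) < N := by exact_mod_cast hN
  calc _ ≤ exp ((a - 1 / 2) * ∑ m ∈ range N, 1 / ((m : ℝ) + 1 / 2)) :=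
        prod_range_div_add_half_le_exp (by linarith) N
    _ ≤ exp ((a - 1 / 2) * (3 + log N)) :=
        exp_le_exp.mpr (mul_le_mul_of_nonneg_left (sum_range_one_div_add_half_le N) (by linarith))
    _ = exp (3 * (a - 1 / 2)) * (N : ℝ) ^ (a - 1 / 2) := by
        rw [rpow_def_of_pos hN', ← exp_add]
        ring_nf

/-- With `K_N = ∑_{j=1}^N I_j` a sum of independent Bernoulli`(1/(2N-2j+1))`
variables, for every fixed `ε > 0`:
`E[e^{ε K_N}] = Γ(N + e^ε/2)√π / (Γ(N + 1/2) Γ(e^ε/2))` and there is a constant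
`C > 0` with `E[e^{ε K_N}] ≤ C · N^{(e^ε - 1)/2}` for all `N ≥ 1`. -/
theorem cm2_cycles_mgf_upper (ε : ℝ) (hε : 0 < ε) :
    (∀ N : ℕ,
      ∫ ω, Real.exp (ε * KN N ω) ∂(cycleMeasure N)
        = Real.Gamma ((N : ℝ) + Real.exp ε / 2) * Real.sqrt π
            / (Real.Gamma ((N : ℝ) + 1 / 2) * Real.Gamma (Real.exp ε / 2))) ∧
    ∃ C : ℝ, 0 < C ∧ ∀ N : ℕ, 1 ≤ N →
      ∫ ω, Real.exp (ε * KN N ω) ∂(cycleMeasure N)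
        ≤ C * (N : ℝ) ^ ((Real.exp ε - 1) / 2) := by
  have ha : 1 / 2 ≤ exp ε / 2 := by linarith [one_lt_exp_iff.mpr hε]
  have hexponent : exp ε / 2 - 1 / 2 = (exp ε - 1) / 2 := by ring
  refine ⟨fun N => ?_, _, exp_pos (3 * (exp ε / 2 - 1 / 2)), fun N hN => ?_⟩
  · rw [integral_exp_mul_KN, prod_div_distrib, prod_range_add_eq_Gamma_div (by positivity),
      prod_range_add_eq_Gamma_div one_half_pos, Gamma_one_half_eq]
    have := Gamma_pos_of_pos (s := exp ε / 2) (by positivity)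
    have := Gamma_pos_of_pos (s := (N : ℝ) + 1 / 2) (by positivity)
    field_simp
  · rw [integral_exp_mul_KN, ← hexponent]
    exact prod_range_div_add_half_le_rpow ha hN
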